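/- For every complex number q with |q| < 1, ∑_{n≥1} q^n (q^n; q)_∞ (q^{n+1}; q)_∞^2 (q^3; q^3)_{n−1} = (1/3)·( (q^3; q^3)_∞ − (q; q)_∞^3 ). -/

import Mathlib

/-- Finite q-Pochhammer symbol `(a; q)_n = ∏_{j=0}^{n-1} (1 - a q^j)`. -/
noncomputable def qPoch (q a : ℂ) (n : ℕ) : ℂ := ∏ j ∈ Finset.range n, (1 - a * q ^ j)

/-- Infinite q-Pochhammer symbol `(a; q)_∞ = ∏_{j=0}^{∞} (1 - a q^j)`. -/
noncomputable def qPochInf (q a : ℂ) : ℂ := ∏' j : ℕ, (1 - a * q ^ j)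

/-!
Writing `F n = (q^{n+1}; q)_∞^3 (q^3; q^3)_n` and `x = q^{n+1}`, the relations
`(x; q)_∞ = (1 - x) (x q; q)_∞` and `(q^3; q^3)_{n+1} = (q^3; q^3)_n (1 - x^3)` together with
`(1 - x^3) - (1 - x)^3 = 3 x (1 - x)` show that the `n`-th summand is `(F (n+1) - F n) / 3`.
The series therefore telescopes to `(lim F - F 0) / 3`, where `F 0 = (q; q)_∞^3` and
`F n → (q^3; q^3)_∞` because `(x; q)_∞ → 1` as `x → 0`.
-/

open Finset Filter Topology Asymptotics

theorem hasSum_of_telescoping {E : Type*} [AddCommGroup E] [TopologicalSpace E]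
    [IsTopologicalAddGroup E] [T2Space E] {f F : ℕ → E} {L : E} (hf : Summable f)
    (hfF : ∀ n, F (n + 1) - F n = f n) (hF : Tendsto F atTop (𝓝 L)) :
    HasSum f (L - F 0) := by
  refine hf.hasSum_iff_tendsto_nat.mpr ?_
  simp only [← hfF, Finset.sum_range_sub]
  exact hF.sub_const _

theorem summable_pow_mul_of_tendsto {𝕜 : Type*} [NormedField 𝕜] [CompleteSpace 𝕜] {q : 𝕜}
    (hq : ‖q‖ < 1) {G : ℕ → 𝕜} {c : 𝕜} (hG : Tendsto G atTop (𝓝 c)) :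
    Summable fun n ↦ q ^ n * G n := by
  refine summable_of_isBigO_nat (summable_geometric_of_lt_one (norm_nonneg q) hq) ?_
  simpa [norm_pow] using
    ((isBigO_refl (fun n ↦ q ^ n) atTop).mul (hG.isBigO_one 𝕜)).norm_right

section QPochhammer

variable {q : ℂ}

theorem qPoch_succ (a : ℂ) (n : ℕ) : qPoch q a (n + 1) = qPoch q a n * (1 - a * q ^ n) :=
  prod_range_succ _ n

theorem multipliable_one_sub_mul_pow (hq : ‖q‖ < 1) (a : ℂ) :
    Multipliable fun j : ℕ ↦ 1 - a * q ^ j := by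
  simpa [sub_eq_add_neg] using
    multipliable_one_add_of_summable (f := fun j ↦ -(a * q ^ j))
      (by simpa [norm_pow] using (summable_geometric_of_lt_one (norm_nonneg q) hq).mul_left ‖a‖)

theorem tendsto_qPoch_qPochInf (hq : ‖q‖ < 1) (a : ℂ) :
    Tendsto (qPoch q a) atTop (𝓝 (qPochInf q a)) :=
  (multipliable_one_sub_mul_pow hq a).hasProd.tendsto_prod_nat

theorem qPochInf_eq_one_sub_mul (hq : ‖q‖ < 1) (a : ℂ) :
    qPochInf q a = (1 - a) * qPochInf q (a * q) := by
  have hshift : (fun j ↦ 1 - a * q ^ (j + 1)) = fun j ↦ 1 - a * q * q ^ j := by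
    ext j; ring
  have h := tprod_eq_zero_mul' (f := fun j ↦ 1 - a * q ^ j)
    (by simpa only [hshift] using multipliable_one_sub_mul_pow hq (a * q))
  simpa only [qPochInf, hshift, pow_zero, mul_one] using h

theorem tendsto_qPochInf_nhds_zero (hq : ‖q‖ < 1) :
    Tendsto (qPochInf q) (𝓝 0) (𝓝 1) := by
  have hbound : ∀ᶠ a in 𝓝 (0 : ℂ), ∀ j : ℕ, ‖-(a * q ^ j)‖ ≤ ‖q‖ ^ j := by
    filter_upwards [Metric.closedBall_mem_nhds (0 : ℂ) one_pos] with a ha j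
    simpa [norm_pow] using mul_le_of_le_one_left (by positivity) (mem_closedBall_zero_iff.mp ha)
  have hpointwise (j : ℕ) : Tendsto (fun a : ℂ ↦ -(a * q ^ j)) (𝓝 0) (𝓝 0) := by
    simpa using ((continuous_mul_const (q ^ j)).tendsto 0).neg
  have := tendsto_tprod_one_add_of_dominated_convergence
    (summable_geometric_of_lt_one (norm_nonneg q) hq) hpointwise hbound
  simp only [add_zero, tprod_one] at this
  exact this.congr fun a ↦ by simp only [qPochInf, sub_eq_add_neg]

theorem qPochInf_cube_mul_qPoch_succ_sub (hq : ‖q‖ < 1) (n : ℕ) :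
    qPochInf q (q ^ (n + 2)) ^ 3 * qPoch (q ^ 3) (q ^ 3) (n + 1)
        - qPochInf q (q ^ (n + 1)) ^ 3 * qPoch (q ^ 3) (q ^ 3) n
      = 3 * (q ^ (n + 1) * qPochInf q (q ^ (n + 1)) * qPochInf q (q ^ (n + 2)) ^ 2 *
          qPoch (q ^ 3) (q ^ 3) n) := by
  have hshift : q ^ (n + 1) * q = q ^ (n + 2) := by ring
  rw [qPoch_succ, qPochInf_eq_one_sub_mul hq (q ^ (n + 1)), hshift]
  ring

end QPochhammer

theorem thmAp_b (q : ℂ) (hq : ‖q‖ < 1) :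
    ∑' n : ℕ, q ^ (n + 1) * qPochInf q (q ^ (n + 1)) *
        (qPochInf q (q ^ (n + 2))) ^ 2 * qPoch (q ^ 3) (q ^ 3) n
      = (1 / 3) * (qPochInf (q ^ 3) (q ^ 3) - (qPochInf q q) ^ 3) := by
  have hq3 : ‖q ^ 3‖ < 1 := by
    rw [norm_pow]; exact pow_lt_one₀ (norm_nonneg q) hq three_ne_zero
  have hA : Tendsto (fun n : ℕ ↦ qPochInf q (q ^ (n + 1))) atTop (𝓝 1) :=
    (tendsto_qPochInf_nhds_zero hq).comp
      ((tendsto_pow_atTop_nhds_zero_of_norm_lt_one hq).comp (tendsto_add_atTop_nat 1))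
  have hC := tendsto_qPoch_qPochInf hq3 (q ^ 3)
  have hsum : Summable fun n : ℕ ↦ q ^ (n + 1) * qPochInf q (q ^ (n + 1)) *
      (qPochInf q (q ^ (n + 2))) ^ 2 * qPoch (q ^ 3) (q ^ 3) n :=
    (summable_pow_mul_of_tendsto hq
      (((hA.const_mul q).mul ((hA.comp (tendsto_add_atTop_nat 1)).pow 2)).mul hC)).congr
      fun n ↦ by simp only [Function.comp_apply]; ring
  have hF : Tendsto (fun n : ℕ ↦ qPochInf q (q ^ (n + 1)) ^ 3 * qPoch (q ^ 3) (q ^ 3) n) atTop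
      (𝓝 (qPochInf (q ^ 3) (q ^ 3))) := by
    simpa using (hA.pow 3).mul hC
  have htelescope :=
    (hasSum_of_telescoping (hsum.mul_left 3) (qPochInf_cube_mul_qPoch_succ_sub hq) hF).mul_left
      (1 / 3 : ℂ)
  simpa [qPoch] using htelescope.tsum_eq
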